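/- arXiv:1505.01328 — 2 statements merged into one kernel-verified Lean document; each statement's English description precedes it below -/
import Mathlib

section
/- The map Γ does not worsen the modulus of continuity beyond a fixed factor: for every bounded f : [0,T] → ℝᴺ and every δ > 0, w_T(Γ(f), δ) ≤ (1 + √N) w_T(f, δ). -/
open Set

/-- The coordinate sum `1 · x` of a vector in Euclidean space. -/
noncomputable def sumC {N : ℕ} (x : EuclideanSpace ℝ (Fin N)) : ℝ := ∑ i, x i

/-- The regulator `g_f(t) = sup_{0 ≤ u ≤ t} (θ - 1·f(u))⁻`. -/
noncomputable def reg (N : ℕ) (θ : ℝ) (f : ℝ → EuclideanSpace ℝ (Fin N)) (t : ℝ) : ℝ :=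
  sSup ((fun u => max (sumC (f u) - θ) 0) '' Icc 0 t)

/-- The `N`-th standard basis vector `e_N`. -/
noncomputable def eN (N : ℕ) (hN : 1 ≤ N) : EuclideanSpace ℝ (Fin N) :=
  EuclideanSpace.single ⟨N - 1, by omega⟩ 1

/-- The Skorohod-type reflection map `Γ(f)(t) = f(t) - g_f(t) e_N`. -/
noncomputable def Gam (N : ℕ) (hN : 1 ≤ N) (θ : ℝ) (f : ℝ → EuclideanSpace ℝ (Fin N))
    (t : ℝ) : EuclideanSpace ℝ (Fin N) :=
  f t - reg N θ f t • eN N hN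

/-- The sup norm `‖f‖_T = sup_{t ∈ [0,T]} ‖f(t)‖`. -/
noncomputable def supNorm (N : ℕ) (T : ℝ) (f : ℝ → EuclideanSpace ℝ (Fin N)) : ℝ :=
  sSup ((fun t => ‖f t‖) '' Icc 0 T)

/-- The modulus of continuity `w_T(f, δ) = sup {‖f(u) - f(s)‖ : 0 ≤ s < u ≤ s + δ ≤ T}`. -/
noncomputable def modCont (N : ℕ) (T : ℝ) (f : ℝ → EuclideanSpace ℝ (Fin N)) (δ : ℝ) : ℝ :=
  sSup {x | ∃ s u : ℝ, 0 ≤ s ∧ s < u ∧ u ≤ s + δ ∧ s + δ ≤ T ∧ x = ‖f u - f s‖}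

/-!
The regulator is the running supremum of `h(v) = (1·f(v) - θ)⁺`, so on `[s, u]` it can grow by at
most the oscillation of `h` there, which is at most `|1·f(v) - 1·f(s)| ≤ √N ‖f(v) - f(s)‖` by
Cauchy–Schwarz against the all-ones vector. Since `Γ(f)(u) - Γ(f)(s)` differs from
`f(u) - f(s)` by that increment times the unit vector `e_N`, the factor `1 + √N` follows.
-/

lemma sumC_sub {N : ℕ} (x y : EuclideanSpace ℝ (Fin N)) : sumC (x - y) = sumC x - sumC y := by
  simp [sumC, Finset.sum_sub_distrib]

lemma abs_sumC_le {N : ℕ} (x : EuclideanSpace ℝ (Fin N)) : |sumC x| ≤ √N * ‖x‖ := by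
  let ones : EuclideanSpace ℝ (Fin N) := WithLp.toLp 2 fun _ => 1
  have h_inner : sumC x = inner ℝ ones x := by simp [PiLp.inner_apply, ones, sumC]
  have h_norm : ‖ones‖ = √N := by simp [EuclideanSpace.norm_eq, ones]
  rw [h_inner, ← h_norm]
  exact abs_real_inner_le_norm _ _

lemma norm_eN (N : ℕ) (hN : 1 ≤ N) : ‖eN N hN‖ = 1 := by simp [eN]

section RunningSup

variable {h : ℝ → ℝ} {s u : ℝ}

lemma csSup_image_Icc_mono (hbdd : BddAbove (h '' Icc 0 u)) (hs : 0 ≤ s) (hsu : s ≤ u) :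
    sSup (h '' Icc 0 s) ≤ sSup (h '' Icc 0 u) :=
  csSup_le_csSup hbdd ⟨h s, s, ⟨hs, le_rfl⟩, rfl⟩ (image_mono (Icc_subset_Icc le_rfl hsu))

lemma csSup_image_Icc_le_add {c : ℝ} (hbdd : BddAbove (h '' Icc 0 s)) (hs : 0 ≤ s)
    (hsu : s ≤ u) (hinc : ∀ v ∈ Icc s u, h v ≤ h s + c) :
    sSup (h '' Icc 0 u) ≤ sSup (h '' Icc 0 s) + c := by
  have hc : 0 ≤ c := by linarith [hinc s ⟨le_rfl, hsu⟩]
  have hhs : h s ≤ sSup (h '' Icc 0 s) := le_csSup hbdd ⟨s, ⟨hs, le_rfl⟩, rfl⟩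
  refine csSup_le ⟨h 0, 0, ⟨le_rfl, hs.trans hsu⟩, rfl⟩ ?_
  rintro _ ⟨v, ⟨hv0, hvu⟩, rfl⟩
  rcases le_total v s with hvs | hsv
  · linarith [le_csSup hbdd ⟨v, ⟨hv0, hvs⟩, rfl⟩]
  · linarith [hinc v ⟨hsv, hvu⟩]

end RunningSup

section Regulator

variable {N : ℕ} {θ : ℝ} {f : ℝ → EuclideanSpace ℝ (Fin N)} {C : ℝ}

lemma bddAbove_reg_image {t : ℝ} (hC : ∀ v ∈ Icc 0 t, ‖f v‖ ≤ C) :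
    BddAbove ((fun v => max (sumC (f v) - θ) 0) '' Icc 0 t) := by
  refine ⟨max (√N * C - θ) 0, ?_⟩
  rintro _ ⟨v, hv, rfl⟩
  refine max_le_max_right 0 (sub_le_sub_right ?_ θ)
  calc sumC (f v) ≤ |sumC (f v)| := le_abs_self _
    _ ≤ √N * ‖f v‖ := abs_sumC_le _
    _ ≤ √N * C := mul_le_mul_of_nonneg_left (hC v hv) (Real.sqrt_nonneg _)

lemma abs_reg_sub_reg_le {s u c : ℝ} (hC : ∀ v ∈ Icc 0 u, ‖f v‖ ≤ C) (hs : 0 ≤ s)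
    (hsu : s ≤ u) (hc : ∀ v ∈ Icc s u, ‖f v - f s‖ ≤ c) :
    |reg N θ f u - reg N θ f s| ≤ √N * c := by
  have hinc : ∀ v ∈ Icc s u,
      max (sumC (f v) - θ) 0 ≤ max (sumC (f s) - θ) 0 + √N * c := by
    intro v hv
    have hmax := abs_max_sub_max_le_abs (sumC (f v) - θ) (sumC (f s) - θ) 0
    have hsum : |sumC (f v) - θ - (sumC (f s) - θ)| ≤ √N * c := by
      rw [sub_sub_sub_cancel_right, ← sumC_sub]
      exact (abs_sumC_le _).trans (mul_le_mul_of_nonneg_left (hc v hv) (Real.sqrt_nonneg _))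
    linarith [le_abs_self (max (sumC (f v) - θ) 0 - max (sumC (f s) - θ) 0)]
  unfold reg
  rw [abs_of_nonneg (sub_nonneg.2 (csSup_image_Icc_mono (bddAbove_reg_image hC) hs hsu)),
    sub_le_iff_le_add']
  exact csSup_image_Icc_le_add (bddAbove_reg_image fun v hv => hC v ⟨hv.1, hv.2.trans hsu⟩)
    hs hsu hinc

lemma norm_Gam_sub_Gam_le (hN : 1 ≤ N) (s u : ℝ) :
    ‖Gam N hN θ f u - Gam N hN θ f s‖ ≤ ‖f u - f s‖ + |reg N θ f u - reg N θ f s| := by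
  have hdiff : Gam N hN θ f u - Gam N hN θ f s
      = (f u - f s) - (reg N θ f u - reg N θ f s) • eN N hN := by
    simp only [Gam, sub_smul]
    abel
  rw [hdiff]
  refine (norm_sub_le _ _).trans_eq ?_
  rw [norm_smul, norm_eN, mul_one, Real.norm_eq_abs]

end Regulator

section ModulusOfContinuity

variable {N : ℕ} {f : ℝ → EuclideanSpace ℝ (Fin N)}

lemma modCont_nonneg (T : ℝ) (f : ℝ → EuclideanSpace ℝ (Fin N)) (δ : ℝ) :
    0 ≤ modCont N T f δ :=
  Real.sSup_nonneg fun _ ⟨_, _, _, _, _, _, hx⟩ => hx ▸ norm_nonneg _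

lemma norm_sub_le_modCont {T δ C s u : ℝ} (hC : ∀ t ∈ Icc 0 T, ‖f t‖ ≤ C) (hs : 0 ≤ s)
    (hsu : s ≤ u) (hu : u ≤ s + δ) (hT : s + δ ≤ T) : ‖f u - f s‖ ≤ modCont N T f δ := by
  rcases hsu.eq_or_lt with rfl | hsu
  · simpa using modCont_nonneg T f δ
  refine le_csSup ⟨C + C, ?_⟩ ⟨s, u, hs, hsu, hu, hT, rfl⟩
  rintro _ ⟨s', u', hs', hsu', hu', hT', rfl⟩
  exact (norm_sub_le _ _).trans
    (add_le_add (hC u' ⟨by linarith, by linarith⟩) (hC s' ⟨hs', by linarith⟩))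

end ModulusOfContinuity

theorem gamma_modulus_general (N : ℕ) (hN : 1 ≤ N) (θ T : ℝ)
    (f : ℝ → EuclideanSpace ℝ (Fin N))
    (hf : ∃ C, ∀ t ∈ Icc (0:ℝ) T, ‖f t‖ ≤ C)
    (δ : ℝ) :
    modCont N T (fun t => Gam N hN θ f t) δ ≤ (1 + Real.sqrt N) * modCont N T f δ := by
  obtain ⟨C, hC⟩ := hf
  set w := modCont N T f δ
  refine Real.sSup_le ?_ (mul_nonneg (by positivity) (modCont_nonneg T f δ))
  rintro _ ⟨s, u, hs, hsu, hu, hT, rfl⟩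
  have hf_mod : ∀ v ∈ Icc s u, ‖f v - f s‖ ≤ w := fun v hv =>
    norm_sub_le_modCont hC hs hv.1 (hv.2.trans hu) hT
  have hreg : |reg N θ f u - reg N θ f s| ≤ √N * w :=
    abs_reg_sub_reg_le (fun v hv => hC v ⟨hv.1, by linarith [hv.2]⟩) hs hsu.le hf_mod
  calc ‖Gam N hN θ f u - Gam N hN θ f s‖
      ≤ ‖f u - f s‖ + |reg N θ f u - reg N θ f s| := norm_Gam_sub_Gam_le hN s u
    _ ≤ w + √N * w := add_le_add (hf_mod u ⟨hsu.le, le_rfl⟩) hreg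
    _ = (1 + √N) * w := by ring

/-- The reflection map `Γ` worsens the modulus of continuity by at most the factor `1 + √N`. -/
theorem gamma_modulus (N : ℕ) (hN : 1 ≤ N) (θ T : ℝ) (hT : 0 < T)
    (f : ℝ → EuclideanSpace ℝ (Fin N))
    (hf : ∃ C, ∀ t ∈ Icc (0:ℝ) T, ‖f t‖ ≤ C)
    (δ : ℝ) (hδ : 0 < δ) :
    modCont N T (fun t => Gam N hN θ f t) δ ≤ (1 + Real.sqrt N) * modCont N T f δ :=
  gamma_modulus_general N hN θ T f hf δ
end

section
/- If f : [0,T] → ℝᴺ is right-continuous and has left limits at every point (cadlag), then the regulator g_f is nondecreasing, right-continuous and has left limits, and consequently Γ(f) is also right-continuous with left limits at every point. -/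
open Set

open Filter

open Topology Bornology

/-!
The regulator is the running supremum of `h = (1·f - θ)⁺`, a continuous image of `f` and hence
cadlag. A cadlag function on `[0,T]` is bounded: by compactness it suffices that each point has a
neighbourhood on which it is bounded, and the left limit, the value and the right limit provide
one. The running supremum of a bounded function is monotone, so it has left limits, and it is
right-continuous wherever the function is, since just beyond `t` the function stays below any
level exceeding its running supremum at `t`. Finally `Γ(f) = f - g_f e_N` is a difference of
cadlag functions.
-/

theorem isBounded_image_of_forall_eventually {X α : Type*} [TopologicalSpace X] [Bornology α]
    {s : Set X} (hs : IsCompact s) (f : X → α)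
    (hloc : ∀ x ∈ s, ∃ S : Set α, IsBounded S ∧ ∀ᶠ u in 𝓝[s] x, f u ∈ S) :
    IsBounded (f '' s) := by
  refine hs.induction_on (p := fun t => IsBounded (f '' t)) (by simp)
    (fun _ _ hst ht => ht.subset (image_mono hst))
    (fun _ _ hs ht => by simpa only [image_union] using hs.union ht) fun x hx => ?_
  obtain ⟨S, hS, hev⟩ := hloc x hx
  exact ⟨f ⁻¹' S, hev, hS.subset (image_preimage_subset f S)⟩

section Cadlag

variable {α : Type*} [PseudoMetricSpace α] {f : ℝ → α} {a b : ℝ}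

theorem exists_isBounded_eventually_nhdsWithin_Icc_of_cadlag
    (hrc : ∀ t ∈ Ico a b, Tendsto f (𝓝[>] t) (𝓝 (f t)))
    (hll : ∀ t ∈ Ioc a b, ∃ L, Tendsto f (𝓝[<] t) (𝓝 L)) {x : ℝ} (hx : x ∈ Icc a b) :
    ∃ S : Set α, IsBounded S ∧ ∀ᶠ u in 𝓝[Icc a b] x, f u ∈ S := by
  obtain ⟨S₁, hS₁, hleft⟩ :
      ∃ S : Set α, IsBounded S ∧ ∀ᶠ u in 𝓝[<] x, u ∈ Icc a b → f u ∈ S := by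
    rcases hx.1.lt_or_eq with hax | rfl
    · obtain ⟨L, hL⟩ := hll x ⟨hax, hx.2⟩
      exact ⟨Metric.ball L 1, Metric.isBounded_ball,
        (hL.eventually (Metric.ball_mem_nhds L one_pos)).mono fun _ hu _ => hu⟩
    · exact ⟨∅, isBounded_empty, eventually_nhdsWithin_of_forall fun u hu hu' =>
        (hu.not_ge hu'.1).elim⟩
  obtain ⟨S₂, hS₂, hright⟩ :
      ∃ S : Set α, IsBounded S ∧ ∀ᶠ u in 𝓝[>] x, u ∈ Icc a b → f u ∈ S := by
    rcases hx.2.lt_or_eq with hxb | rfl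
    · exact ⟨Metric.ball (f x) 1, Metric.isBounded_ball,
        ((hrc x ⟨hx.1, hxb⟩).eventually (Metric.ball_mem_nhds _ one_pos)).mono fun _ hu _ => hu⟩
    · exact ⟨∅, isBounded_empty, eventually_nhdsWithin_of_forall fun u hu hu' =>
        (hu.not_ge hu'.2).elim⟩
  refine ⟨S₁ ∪ {f x} ∪ S₂, (hS₁.union isBounded_singleton).union hS₂, ?_⟩
  rw [eventually_nhdsWithin_iff, ← nhdsLT_sup_nhdsGE, ← nhdsGT_sup_nhdsWithin_singleton,
    nhdsWithin_singleton, sup_comm (𝓝[>] x), eventually_sup, eventually_sup, eventually_pure]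
  exact ⟨hleft.mono fun u hu hu' => .inl (.inl (hu hu')), fun _ => .inl (.inr rfl),
    hright.mono fun u hu hu' => .inr (hu hu')⟩

theorem isBounded_image_Icc_of_cadlag
    (hrc : ∀ t ∈ Ico a b, Tendsto f (𝓝[>] t) (𝓝 (f t)))
    (hll : ∀ t ∈ Ioc a b, ∃ L, Tendsto f (𝓝[<] t) (𝓝 L)) :
    IsBounded (f '' Icc a b) :=
  isBounded_image_of_forall_eventually isCompact_Icc f fun _ hx =>
    exists_isBounded_eventually_nhdsWithin_Icc_of_cadlag hrc hll hx

end Cadlag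

theorem MonotoneOn.exists_tendsto_nhdsLT {α β : Type*} [LinearOrder α] [TopologicalSpace α]
    [OrderTopology α] [DenselyOrdered α] [ConditionallyCompleteLinearOrder β]
    [TopologicalSpace β] [OrderTopology β] {f : α → β} {a b t : α}
    (hf : MonotoneOn f (Icc a b)) (ht : t ∈ Ioc a b) :
    ∃ L, Tendsto f (𝓝[<] t) (𝓝 L) := by
  have hsub : Ioo a t ⊆ Icc a b := Ioo_subset_Icc_self.trans (Icc_subset_Icc_right ht.2)
  refine ⟨_, MonotoneOn.tendsto_nhdsWithin_Ioo_left (nonempty_Ioo.2 ht.1) (hf.mono hsub) ?_⟩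
  refine ⟨f b, ?_⟩
  rintro _ ⟨u, hu, rfl⟩
  exact hf (hsub hu) ⟨ht.1.le.trans ht.2, le_rfl⟩ (hu.2.le.trans ht.2)

noncomputable def runningSup {α β : Type*} [Preorder α] [SupSet β] (h : α → β) (a t : α) : β :=
  sSup (h '' Icc a t)

section RunningSup

variable {α β : Type*} [LinearOrder α] [ConditionallyCompleteLinearOrder β]
  {h : α → β} {a b t : α}

theorem le_runningSup (hbdd : BddAbove (h '' Icc a b)) {u : α} (hu : u ∈ Icc a t) (htb : t ≤ b) :
    h u ≤ runningSup h a t :=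
  le_csSup (hbdd.mono (image_mono (Icc_subset_Icc_right htb))) (mem_image_of_mem h hu)

theorem runningSup_le {m : β} (hat : a ≤ t) (hm : ∀ u ∈ Icc a t, h u ≤ m) :
    runningSup h a t ≤ m :=
  csSup_le ((nonempty_Icc.2 hat).image h) (forall_mem_image.2 hm)

theorem runningSup_monotoneOn (hbdd : BddAbove (h '' Icc a b)) :
    MonotoneOn (runningSup h a) (Icc a b) := fun _ hs _ ht hst =>
  runningSup_le hs.1 fun _ hu => le_runningSup hbdd ⟨hu.1, hu.2.trans hst⟩ ht.2

variable [TopologicalSpace α] [OrderTopology α] [TopologicalSpace β] [OrderTopology β]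
  [DenselyOrdered β]

theorem tendsto_runningSup_nhdsGT (hbdd : BddAbove (h '' Icc a b)) (ht : t ∈ Ico a b)
    (hrc : Tendsto h (𝓝[>] t) (𝓝 (h t))) :
    Tendsto (runningSup h a) (𝓝[>] t) (𝓝 (runningSup h a t)) := by
  have hmono := runningSup_monotoneOn hbdd
  refine tendsto_order.2 ⟨fun m hm => ?_, fun m hm => ?_⟩
  · filter_upwards [Ioo_mem_nhdsGT ht.2] with u hu
    exact hm.trans_le (hmono ⟨ht.1, ht.2.le⟩ ⟨ht.1.trans hu.1.le, hu.2.le⟩ hu.1.le)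
  · obtain ⟨m', hm', hm'm⟩ := exists_between hm
    have hht : h t < m' := (le_runningSup hbdd ⟨ht.1, le_rfl⟩ ht.2.le).trans_lt hm'
    obtain ⟨c, htc, hc⟩ :=
      (mem_nhdsGT_iff_exists_Ioo_subset' ht.2).1 (hrc.eventually_lt_const hht)
    filter_upwards [Ioo_mem_nhdsGT htc] with u hu
    refine (runningSup_le (ht.1.trans hu.1.le) fun v hv => ?_).trans_lt hm'm
    rcases le_or_gt v t with hvt | htv
    · exact (le_runningSup hbdd ⟨hv.1, hvt⟩ ht.2.le).trans hm'.le
    · exact (hc ⟨htv, hv.2.trans_lt hu.2⟩).le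

end RunningSup

theorem continuous_sumC (N : ℕ) : Continuous (@sumC N) :=
  continuous_finsetSum _ fun i _ => PiLp.continuous_apply 2 _ i

theorem gamma_cadlag_general (N : ℕ) (hN : 1 ≤ N) (θ T : ℝ)
    (f : ℝ → EuclideanSpace ℝ (Fin N))
    (hrc : ∀ t ∈ Ico (0:ℝ) T, Tendsto f (nhdsWithin t (Ioi t)) (nhds (f t)))
    (hll : ∀ t ∈ Ioc (0:ℝ) T, ∃ L, Tendsto f (nhdsWithin t (Iio t)) (nhds L)) :
    MonotoneOn (reg N θ f) (Icc 0 T) ∧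
    (∀ t ∈ Ico (0:ℝ) T,
      Tendsto (reg N θ f) (nhdsWithin t (Ioi t)) (nhds (reg N θ f t))) ∧
    (∀ t ∈ Ioc (0:ℝ) T, ∃ L : ℝ, Tendsto (reg N θ f) (nhdsWithin t (Iio t)) (nhds L)) ∧
    (∀ t ∈ Ico (0:ℝ) T,
      Tendsto (Gam N hN θ f) (nhdsWithin t (Ioi t)) (nhds (Gam N hN θ f t))) ∧
    (∀ t ∈ Ioc (0:ℝ) T, ∃ L : EuclideanSpace ℝ (Fin N),
      Tendsto (Gam N hN θ f) (nhdsWithin t (Iio t)) (nhds L)) := by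
  set h : ℝ → ℝ := fun u => max (sumC (f u) - θ) 0
  have hφ : Continuous fun x : EuclideanSpace ℝ (Fin N) => max (sumC x - θ) 0 :=
    ((continuous_sumC N).sub continuous_const).max continuous_const
  have hh_rc : ∀ t ∈ Ico (0:ℝ) T, Tendsto h (𝓝[>] t) (𝓝 (h t)) := fun t ht =>
    (hφ.tendsto _).comp (hrc t ht)
  have hbdd : BddAbove (h '' Icc 0 T) := (isBounded_image_Icc_of_cadlag hh_rc fun t ht =>
    (hll t ht).elim fun L hL => ⟨_, (hφ.tendsto L).comp hL⟩).bddAbove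
  have hreg : reg N θ f = runningSup h 0 := rfl
  rw [hreg]
  have hreg_mono : MonotoneOn (runningSup h 0) (Icc 0 T) := runningSup_monotoneOn hbdd
  have hreg_rc : ∀ t ∈ Ico (0:ℝ) T, Tendsto (runningSup h 0) (𝓝[>] t) (𝓝 (runningSup h 0 t)) :=
    fun t ht => tendsto_runningSup_nhdsGT hbdd ht (hh_rc t ht)
  have hreg_ll : ∀ t ∈ Ioc (0:ℝ) T, ∃ L, Tendsto (runningSup h 0) (𝓝[<] t) (𝓝 L) :=
    fun t ht => hreg_mono.exists_tendsto_nhdsLT ht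
  refine ⟨hreg_mono, hreg_rc, hreg_ll,
    fun t ht => (hrc t ht).sub ((hreg_rc t ht).smul_const _), fun t ht => ?_⟩
  obtain ⟨Lf, hLf⟩ := hll t ht
  obtain ⟨Lg, hLg⟩ := hreg_ll t ht
  exact ⟨Lf - Lg • eN N hN, hLf.sub (hLg.smul_const _)⟩

/-- If `f` is cadlag on `[0,T]` (right-continuous on `[0,T)` with left limits on `(0,T]`),
then the regulator `g_f` is nondecreasing, right-continuous with left limits, and consequently
`Γ(f)` is also right-continuous with left limits. -/
theorem gamma_cadlag (N : ℕ) (hN : 1 ≤ N) (θ T : ℝ) (hT : 0 < T)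
    (f : ℝ → EuclideanSpace ℝ (Fin N))
    (hrc : ∀ t ∈ Ico (0:ℝ) T, Tendsto f (nhdsWithin t (Ioi t)) (nhds (f t)))
    (hll : ∀ t ∈ Ioc (0:ℝ) T, ∃ L, Tendsto f (nhdsWithin t (Iio t)) (nhds L)) :
    MonotoneOn (reg N θ f) (Icc 0 T) ∧
    (∀ t ∈ Ico (0:ℝ) T,
      Tendsto (reg N θ f) (nhdsWithin t (Ioi t)) (nhds (reg N θ f t))) ∧
    (∀ t ∈ Ioc (0:ℝ) T, ∃ L : ℝ, Tendsto (reg N θ f) (nhdsWithin t (Iio t)) (nhds L)) ∧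
    (∀ t ∈ Ico (0:ℝ) T,
      Tendsto (Gam N hN θ f) (nhdsWithin t (Ioi t)) (nhds (Gam N hN θ f t))) ∧
    (∀ t ∈ Ioc (0:ℝ) T, ∃ L : EuclideanSpace ℝ (Fin N),
      Tendsto (Gam N hN θ f) (nhdsWithin t (Iio t)) (nhds L)) :=
  gamma_cadlag_general N hN θ T f hrc hll
end
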